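/- For every STI derivation Π ⊳ Γ ⊢ M : σ, rk(Π) ≤ |M| ≤ |Π|, where rk(Π) is the rank of Π, |M| is the size of the term and |Π| the size of the derivation. -/

import Mathlib

/-- λ-terms with named variables. -/
inductive Tm : Type where
  | var : ℕ → Tm
  | app : Tm → Tm → Tm
  | lam : ℕ → Tm → Tm
deriving DecidableEq

/-- Size of a term: |x|=1, |MN|=|M|+|N|+1, |λx.M|=|M|+1. -/
def tmSize : Tm → ℕ
  | .var _ => 1
  | .app M N => tmSize M + tmSize N + 1
  | .lam _ M => tmSize M + 1

/-- Free variables. -/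
def FV : Tm → Finset ℕ
  | .var x => {x}
  | .app M N => FV M ∪ FV N
  | .lam x M => FV M \ {x}

/-- Substitution M[N/x]. -/
def subst : Tm → ℕ → Tm → Tm
  | .var y, x, N => if y = x then N else .var y
  | .app P Q, x, N => .app (subst P x N) (subst Q x N)
  | .lam y P, x, N => if y = x then .lam y P else .lam y (subst P x N)

/-- Rename free occurrences of y to x. -/
def rename : Tm → ℕ → ℕ → Tm
  | .var z, y, x => if z = y then .var x else .var z
  | .app P Q, y, x => .app (rename P y x) (rename Q y x)
  | .lam z P, y, x => if z = y then .lam z P else .lam z (rename P y x)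

/-- Rename each of the variables xs i to x. -/
def renameAll {n : ℕ} (xs : Fin n → ℕ) (x : ℕ) (M : Tm) : Tm :=
  (List.ofFn xs).foldl (fun t y => rename t y x) M

/-- One step of β-reduction (contextual closure of (λx.M)N → M[N/x]). -/
inductive Step : Tm → Tm → Prop where
  | beta (x : ℕ) (M N : Tm) : Step (.app (.lam x M) N) (subst M x N)
  | appL {M M' : Tm} (N : Tm) : Step M M' → Step (.app M N) (.app M' N)
  | appR (M : Tm) {N N' : Tm} : Step N N' → Step (.app M N) (.app M N')
  | lam (x : ℕ) {M M' : Tm} : Step M M' → Step (.lam x M) (.lam x M')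

/-- n-step reduction sequences. -/
inductive Steps : ℕ → Tm → Tm → Prop where
  | refl (M : Tm) : Steps 0 M M
  | head {M M' M'' : Tm} {n : ℕ} : Step M M' → Steps n M' M'' → Steps (n+1) M M''

/-- Strong normalization: every reduction sequence from M is finite. -/
def SN (M : Tm) : Prop := Acc (fun a b => Step b a) M

mutual
/-- Linear types A ::= a | σ → A. -/
inductive LTy : Type where
  | tvar : ℕ → LTy
  | arrow : ITy → LTy → LTy
/-- Intersection types σ ::= A | σ₁ ∧ σ₂ ∧ ... ∧ σₙ (n > 1): an intersection
carries two first components plus a (possibly empty) list of further components,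
so it always has ≥ 2 components.  ∧ is non-idempotent and non-associative. -/
inductive ITy : Type where
  | lin : LTy → ITy
  | inter : ITy → ITy → List ITy → ITy
end

/-- The list of components of an intersection σ₁ ∧ ... ∧ σₙ. -/
def ITy.components (σ₁ σ₂ : ITy) (rest : List ITy) : List ITy := σ₁ :: σ₂ :: rest

mutual
/-- Number of elements of a type. -/
def nelem : ITy → ℕ
  | .lin _ => 1
  | .inter σ₁ σ₂ rest => nelem σ₁ + nelem σ₂ + nelemList rest
def nelemList : List ITy → ℕ
  | [] => 0
  | σ :: l => nelem σ + nelemList l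
end

/-- Contexts: partial maps from variables to intersection types. -/
def Ctx : Type := ℕ → Option ITy

def Ctx.dom (Γ : Ctx) : Set ℕ := {x | Γ x ≠ none}
def Ctx.empty : Ctx := fun _ => none
def Ctx.update (Γ : Ctx) (x : ℕ) (σ : ITy) : Ctx := Function.update Γ x (some σ)
/-- Union of contexts (used for disjoint contexts Γ, Δ). -/
def Ctx.union (Γ Δ : Ctx) : Ctx := fun y => (Γ y).orElse (fun _ => Δ y)
/-- Binary intersection of types. -/
def ITy.wedge (σ τ : ITy) : ITy := .inter σ τ []
/-- Intersection Γ ∧ Δ of contexts. -/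
def Ctx.wedge (Γ Δ : Ctx) : Ctx := fun y =>
  match Γ y, Δ y with
  | some σ, some τ => some (σ.wedge τ)
  | some σ, none => some σ
  | none, o => o
def Ctx.wedgeAll {n : ℕ} (Γs : Fin n → Ctx) : Ctx :=
  (List.ofFn Γs).foldr Ctx.wedge Ctx.empty
def Ctx.extendList (Γ : Ctx) : List (ℕ × ITy) → Ctx
  | [] => Γ
  | p :: rest => (Ctx.extendList Γ rest).update p.1 p.2

/-- The type assignment system STI. -/
inductive Der : Ctx → Tm → ITy → Type where
  | ax (x : ℕ) (A : LTy) :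
      Der (Ctx.empty.update x (.lin A)) (.var x) (.lin A)
  | weak {Γ : Ctx} {M : Tm} {σ : ITy} (x : ℕ) (A : LTy) (hx : x ∉ Γ.dom) :
      Der Γ M σ → Der (Γ.update x (.lin A)) M σ
  | lamI {Γ : Ctx} {x : ℕ} {σ : ITy} {M : Tm} {A : LTy} (hx : x ∉ Γ.dom) :
      Der (Γ.update x σ) M (.lin A) → Der Γ (.lam x M) (.lin (.arrow σ A))
  | appE {Γ Δ : Ctx} {M N : Tm} {σ : ITy} {A : LTy} (h : Disjoint Γ.dom Δ.dom) :
      Der Γ M (.lin (.arrow σ A)) → Der Δ N σ → Der (Γ.union Δ) (.app M N) (.lin A)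
  | inter {M : Tm} (σ₁ σ₂ : ITy) (rest : List ITy)
      (Γs : Fin (rest.length + 2) → Ctx)
      (prems : (i : Fin (rest.length + 2)) → Der (Γs i) M ((ITy.components σ₁ σ₂ rest).get i)) :
      Der (Ctx.wedgeAll Γs) M (.inter σ₁ σ₂ rest)
  | mux {Γ : Ctx} {M : Tm} {τ : ITy} (x : ℕ) (σ₁ σ₂ : ITy) (rest : List ITy)
      (xs : Fin (rest.length + 2) → ℕ)
      (hinj : Function.Injective xs) (hfresh : ∀ i, xs i ∉ Γ.dom) (hx : x ∉ Γ.dom) :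
      Der (Γ.extendList (List.ofFn fun i => (xs i, (ITy.components σ₁ σ₂ rest).get i))) M τ →
      Der (Γ.update x (.inter σ₁ σ₂ rest)) (renameAll xs x M) τ

/-- Size of a derivation. -/
def Der.size : ∀ {Γ M σ}, Der Γ M σ → ℕ
  | _, _, _, .ax _ _ => 1
  | _, _, _, .weak _ _ _ d => d.size + 1
  | _, _, _, .lamI _ d => d.size + 1
  | _, _, _, .appE _ d₁ d₂ => d₁.size + d₂.size + 1
  | _, _, _, .inter _ _ _ _ prems => (∑ i, (prems i).size) + 1
  | _, _, _, .mux _ _ _ _ _ _ _ _ d => d.size + 1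

/-- Degree: maximal nesting of (∧ₙ) rules. -/
def Der.degree : ∀ {Γ M σ}, Der Γ M σ → ℕ
  | _, _, _, .ax _ _ => 0
  | _, _, _, .weak _ _ _ d => d.degree
  | _, _, _, .lamI _ d => d.degree
  | _, _, _, .appE _ d₁ d₂ => max d₁.degree d₂.degree
  | _, _, _, .inter _ _ _ _ prems => (Finset.univ.sup fun i => (prems i).degree) + 1
  | _, _, _, .mux _ _ _ _ _ _ _ _ d => d.degree

/-- Rank: max of 1 and the ranks of all (m) rules (number of contracted
variables actually free in the subject of the premise). -/
def Der.rank : ∀ {Γ M σ}, Der Γ M σ → ℕ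
  | _, _, _, .ax _ _ => 1
  | _, _, _, .weak _ _ _ d => d.rank
  | _, _, _, .lamI _ d => d.rank
  | _, _, _, .appE _ d₁ d₂ => max d₁.rank d₂.rank
  | _, _, _, .inter _ _ _ _ prems => Finset.univ.sup fun i => (prems i).rank
  | _, _, _, @Der.mux _ M _ _ _ _ _ xs _ _ _ d =>
      max d.rank ((Finset.univ.filter fun i => xs i ∈ FV M).card)

/-- Weight of a derivation with respect to r. -/
def Der.weight (r : ℕ) : ∀ {Γ M σ}, Der Γ M σ → ℕ
  | _, _, _, .ax _ _ => 1
  | _, _, _, .weak _ _ _ d => d.weight r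
  | _, _, _, .lamI _ d => d.weight r + 1
  | _, _, _, .appE _ d₁ d₂ => d₁.weight r + d₂.weight r + 1
  | _, _, _, .inter _ _ _ _ prems => r * Finset.univ.sup fun i => (prems i).weight r
  | _, _, _, .mux _ _ _ _ _ _ _ _ d => d.weight r

/-! Both bounds go by induction on the derivation. Renaming preserves the size of a term, so each
rule application adds one to |Π| and at most one symbol to the subject, except (∧ₙ), whose subject is
that of every premise. The rank of an (m) rule counts distinct variables (the `xs i` are pairwise
different) free in its subject, and a term has no more free variables than symbols. -/

theorem tmSize_rename (M : Tm) (y x : ℕ) : tmSize (rename M y x) = tmSize M := by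
  induction M with
  | var z => unfold rename; split <;> rfl
  | app P Q ihP ihQ => simp only [rename, tmSize, ihP, ihQ]
  | lam z P ih => unfold rename; split <;> simp only [tmSize, ih]

theorem tmSize_renameAll {n : ℕ} (xs : Fin n → ℕ) (x : ℕ) (M : Tm) :
    tmSize (renameAll xs x M) = tmSize M := by
  unfold renameAll
  induction List.ofFn xs generalizing M with
  | nil => rfl
  | cons y l ih => rw [List.foldl_cons, ih, tmSize_rename]

theorem card_FV_le_tmSize (M : Tm) : (FV M).card ≤ tmSize M := by
  induction M with
  | var z => simp [FV, tmSize]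
  | app P Q ihP ihQ =>
    have := Finset.card_union_le (FV P) (FV Q)
    simp only [FV, tmSize]
    omega
  | lam z P ih =>
    have := Finset.card_le_card (Finset.sdiff_subset (s := FV P) (t := {z}))
    simp only [FV, tmSize]
    omega

theorem card_filter_mem_FV_le_tmSize {n : ℕ} {xs : Fin n → ℕ} (hinj : Function.Injective xs)
    (M : Tm) : (Finset.univ.filter fun i => xs i ∈ FV M).card ≤ tmSize M :=
  (Finset.card_le_card_of_injOn xs (fun _ hi => (Finset.mem_filter.mp hi).2)
    hinj.injOn).trans (card_FV_le_tmSize M)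

namespace Der

theorem rank_le_tmSize {Γ : Ctx} {M : Tm} {σ : ITy} (P : Der Γ M σ) : P.rank ≤ tmSize M := by
  induction P with
  | ax => rfl
  | weak _ _ _ _ ih => exact ih
  | lamI _ _ ih => exact ih.trans (Nat.le_succ _)
  | appE _ _ _ ih₁ ih₂ => simp only [rank, tmSize]; omega
  | inter _ _ _ _ _ ih => exact Finset.sup_le fun i _ => ih i
  | mux _ _ _ _ _ hinj _ _ _ ih =>
    rw [rank, tmSize_renameAll]
    exact max_le ih (card_filter_mem_FV_le_tmSize hinj _)

theorem tmSize_le_size {Γ : Ctx} {M : Tm} {σ : ITy} (P : Der Γ M σ) : tmSize M ≤ P.size := by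
  induction P with
  | ax => rfl
  | weak _ _ _ _ ih => exact ih.trans (Nat.le_succ _)
  | lamI _ _ ih => exact Nat.succ_le_succ ih
  | appE _ _ _ ih₁ ih₂ => simp only [size, tmSize]; omega
  | inter _ _ _ _ prems ih =>
    calc _ ≤ (prems 0).size := ih 0
      _ ≤ ∑ i, (prems i).size :=
        Finset.single_le_sum (f := fun i => (prems i).size) (fun _ _ => Nat.zero_le _)
          (Finset.mem_univ 0)
      _ ≤ _ := Nat.le_succ _
  | mux _ _ _ _ _ _ _ _ _ ih =>
    rw [tmSize_renameAll]
    exact ih.trans (Nat.le_succ _)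

end Der

/-- rk(Π) ≤ |M| ≤ |Π|. -/
theorem sti_rank_le_size
    {Γ : Ctx} {M : Tm} {σ : ITy} (P : Der Γ M σ) :
    P.rank ≤ tmSize M ∧ tmSize M ≤ P.size :=
  ⟨P.rank_le_tmSize, P.tmSize_le_size⟩
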